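/- The global robustness of entanglement of the two-qubit singlet state (|01⟩−|10⟩)/√2 equals 1: mixing it with equal weight of an appropriate state yields a separable state, and for any t < 1 and any state τ the mixture (1/(1+t))(|ψ⁻⟩⟨ψ⁻| + tτ) is entangled. -/

import Mathlib

open Matrix Kronecker
open scoped ComplexOrder BigOperators

/-- A density matrix: positive semidefinite with unit trace. -/
def IsDensity {n : Type*} [Fintype n] [DecidableEq n] (M : Matrix n n ℂ) : Prop :=
  M.PosSemidef ∧ M.trace = 1

/-- A two-qubit state is separable if it is a convex combination of product states. -/
def SepState (ρ : Matrix (Fin 2 × Fin 2) (Fin 2 × Fin 2) ℂ) : Prop :=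
  ∃ (k : ℕ) (p : Fin k → ℝ) (A B : Fin k → Matrix (Fin 2) (Fin 2) ℂ),
    (∀ i, 0 ≤ p i) ∧ (∑ i, p i = 1) ∧
    (∀ i, IsDensity (A i) ∧ IsDensity (B i)) ∧
    ρ = ∑ i, p i • (A i ⊗ₖ B i)

/-- The global robustness of entanglement. -/
noncomputable def robustness (σ : Matrix (Fin 2 × Fin 2) (Fin 2 × Fin 2) ℂ) : ℝ :=
  sInf {t : ℝ | 0 ≤ t ∧ ∃ τ : Matrix (Fin 2 × Fin 2) (Fin 2 × Fin 2) ℂ, IsDensity τ ∧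
    (1 / (1 + t)) • (σ + t • τ) ∈ {ρ | SepState ρ}}

noncomputable def singlet : Fin 2 × Fin 2 → ℂ :=
  fun p => (if p = (0, 1) then 1 else if p = (1, 0) then -1 else 0) / Real.sqrt 2

noncomputable def singletProj : Matrix (Fin 2 × Fin 2) (Fin 2 × Fin 2) ℂ :=
  Matrix.vecMulVec singlet (star singlet)

/-! ### Auxiliary material -/

noncomputable def ov (M : Matrix (Fin 2 × Fin 2) (Fin 2 × Fin 2) ℂ) : ℂ :=
  star singlet ⬝ᵥ M *ᵥ singlet

lemma sqrt2_sq : (Real.sqrt 2 : ℂ) * (Real.sqrt 2 : ℂ) = 2 := by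
  rw [← Complex.ofReal_mul, Real.mul_self_sqrt (by norm_num : (0:ℝ) ≤ 2)]
  norm_num

lemma sqrt2_ne : (Real.sqrt 2 : ℂ) ≠ 0 := by
  simpa using Real.sqrt_ne_zero'.2 (by norm_num)

lemma s00 : singlet (0,0) = 0 := by rw [singlet]; norm_num [Prod.ext_iff]
lemma s01 : singlet (0,1) = ((Real.sqrt 2 : ℂ))⁻¹ := by
  rw [singlet]; norm_num [Prod.ext_iff]
lemma s10 : singlet (1,0) = -((Real.sqrt 2 : ℂ))⁻¹ := by
  rw [singlet]; norm_num [Prod.ext_iff, neg_div]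
lemma s11 : singlet (1,1) = 0 := by rw [singlet]; norm_num [Prod.ext_iff]

lemma ov_eq (M : Matrix (Fin 2 × Fin 2) (Fin 2 × Fin 2) ℂ) :
    ov M = (M (0,1) (0,1) - M (0,1) (1,0) - M (1,0) (0,1) + M (1,0) (1,0)) / 2 := by
  simp only [ov, dotProduct, mulVec, dotProduct, Fintype.sum_prod_type, Fin.sum_univ_two,
    Pi.star_apply, s00, s01, s10, s11, Complex.star_def, map_zero, map_neg, map_inv₀, Complex.conj_ofReal,
    star_zero, mul_zero, zero_mul, zero_add, add_zero, mul_neg, neg_mul, neg_neg, star_neg]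
  field_simp
  rw [← sqrt2_sq]
  ring

lemma conj_singlet (q : Fin 2 × Fin 2) : star (singlet q) = singlet q := by
  rw [singlet]
  split_ifs <;> simp [Complex.conj_ofReal]

lemma P_apply (p q : Fin 2 × Fin 2) :
    singletProj p q = (if p = (0,1) then 1 else if p = (1,0) then -1 else 0) *
      (if q = (0,1) then 1 else if q = (1,0) then -1 else 0) / 2 := by
  simp only [singletProj, vecMulVec_apply, Pi.star_apply, conj_singlet]
  rw [singlet, singlet, div_mul_div_comm, ← sqrt2_sq]

lemma psd_outer {n : Type*} [Fintype n] [DecidableEq n] (u : n → ℂ) :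
    (Matrix.vecMulVec u (star u)).PosSemidef := by
  rw [Matrix.vecMulVec_eq Unit, ← Matrix.conjTranspose_replicateCol]
  exact Matrix.posSemidef_self_mul_conjTranspose _

lemma ov_rsmul (r : ℝ) (M : Matrix (Fin 2 × Fin 2) (Fin 2 × Fin 2) ℂ) :
    ov (r • M) = (r : ℂ) * ov M := by
  simp only [ov_eq, Matrix.smul_apply, Complex.real_smul]
  ring

lemma ov_add (M N : Matrix (Fin 2 × Fin 2) (Fin 2 × Fin 2) ℂ) :
    ov (M + N) = ov M + ov N := by
  simp only [ov_eq, Matrix.add_apply]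
  ring

lemma ov_sum {k : ℕ} (f : Fin k → Matrix (Fin 2 × Fin 2) (Fin 2 × Fin 2) ℂ) :
    ov (∑ i, f i) = ∑ i, ov (f i) := by
  simp only [ov_eq, Matrix.sum_apply]
  rw [← Finset.sum_sub_distrib, ← Finset.sum_sub_distrib, ← Finset.sum_add_distrib,
    Finset.sum_div]

lemma ov_P : ov singletProj = 1 := by
  rw [ov_eq]
  simp [P_apply]
  norm_num

lemma ov_psd_re_nonneg {τ : Matrix (Fin 2 × Fin 2) (Fin 2 × Fin 2) ℂ} (h : τ.PosSemidef) :
    0 ≤ (ov τ).re ∧ (ov τ).im = 0 := by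
  have := Complex.nonneg_iff.mp (h.dotProduct_mulVec_nonneg singlet)
  exact ⟨this.1, this.2.symm⟩


lemma density_facts {A : Matrix (Fin 2) (Fin 2) ℂ} (h : IsDensity A) :
    A 0 0 = ((A 0 0).re : ℂ) ∧ A 1 1 = ((A 1 1).re : ℂ) ∧ 0 ≤ (A 0 0).re ∧ 0 ≤ (A 1 1).re ∧
    (A 0 0).re + (A 1 1).re = 1 ∧ A 1 0 = starRingEnd ℂ (A 0 1) ∧
    Complex.normSq (A 0 1) ≤ (A 0 0).re * (A 1 1).re := by
  obtain ⟨hPSD, htr⟩ := h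
  have hH := hPSD.1
  have hP := hPSD.dotProduct_mulVec_nonneg
  have hd : ∀ i, 0 ≤ A i i := by
    intro i
    have := hP (Pi.single i 1)
    simpa [dotProduct, Matrix.mulVec, Pi.single_apply, Finset.sum_ite_eq,
      Finset.sum_ite_eq'] using this
  have h00 := Complex.nonneg_iff.mp (hd 0)
  have h11 := Complex.nonneg_iff.mp (hd 1)
  have hA00 : A 0 0 = ((A 0 0).re : ℂ) := by
    apply Complex.ext <;> simp [h00.2.symm]
  have hA11 : A 1 1 = ((A 1 1).re : ℂ) := by
    apply Complex.ext <;> simp [h11.2.symm]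
  have hherm : A 1 0 = starRingEnd ℂ (A 0 1) := by
    simpa [Matrix.conjTranspose_apply] using (congrFun (congrFun hH 1) 0).symm
  have htr' : A 0 0 + A 1 1 = 1 := by
    simpa [Matrix.trace, Matrix.diag, Fin.sum_univ_two] using htr
  have hre : (A 0 0).re + (A 1 1).re = 1 := by
    have := congrArg Complex.re htr'; simpa using this
  refine ⟨hA00, hA11, h00.1, h11.1, hre, hherm, ?_⟩
  set a := (A 0 0).re
  set c := (A 1 1).re
  set b := A 0 1
  have hx1 := (Complex.nonneg_iff.mp (hP ![b, -(A 0 0)])).1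
  have hx2 := (Complex.nonneg_iff.mp (hP ![A 1 1, -(starRingEnd ℂ b)])).1
  have e1 : dotProduct (star ![b, -(A 0 0)]) (A *ᵥ ![b, -(A 0 0)])
      = ((a : ℂ)) * ((a : ℂ) * (c : ℂ) - (Complex.normSq b : ℂ)) := by
    simp [dotProduct, Matrix.mulVec, Fin.sum_univ_two, hherm,
      Complex.normSq_eq_conj_mul_self]
    rw [hA00, hA11]
    simp only [Complex.conj_ofReal]
    push_cast
    ring
  have e2 : dotProduct (star ![A 1 1, -(starRingEnd ℂ b)])
      (A *ᵥ ![A 1 1, -(starRingEnd ℂ b)])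
      = ((c : ℂ)) * ((a : ℂ) * (c : ℂ) - (Complex.normSq b : ℂ)) := by
    simp [dotProduct, Matrix.mulVec, Fin.sum_univ_two, hherm,
      Complex.normSq_eq_conj_mul_self]
    rw [hA00, hA11]
    simp only [Complex.conj_ofReal]
    push_cast
    ring
  rw [e1] at hx1
  rw [e2] at hx2
  have r1 : 0 ≤ a * (a * c - Complex.normSq b) := by
    have := hx1; push_cast at this; simpa using this
  have r2 : 0 ≤ c * (a * c - Complex.normSq b) := by
    have := hx2; push_cast at this; simpa using this
  nlinarith [r1, r2, hre]
lemma prod_bound {A B : Matrix (Fin 2) (Fin 2) ℂ} (hA : IsDensity A) (hB : IsDensity B) :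
    (ov (A ⊗ₖ B)).re ≤ 1 / 2 := by
  obtain ⟨eA0, eA1, ha, hc, hac, hermA, hbA⟩ := density_facts hA
  obtain ⟨eB0, eB1, ha', hc', hac', hermB, hbB⟩ := density_facts hB
  rw [ov_eq]
  have hk : ∀ (i j k l : Fin 2), (A ⊗ₖ B) (i,j) (k,l) = A i k * B j l := by
    intro i j k l; rfl
  rw [hk, hk, hk, hk, hermA, hermB]
  set a := (A 0 0).re
  set c := (A 1 1).re
  set a' := (B 0 0).re
  set c' := (B 1 1).re
  set b := A 0 1
  set b' := B 0 1
  have hre : ((A 0 0 * B 1 1 - b * starRingEnd ℂ b' - starRingEnd ℂ b * b' + A 1 1 * B 0 0) / 2).re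
      = (a * c' + c * a' - 2 * (b * starRingEnd ℂ b').re) / 2 := by
    rw [eA0, eA1, eB0, eB1]
    have : (starRingEnd ℂ b * b') = starRingEnd ℂ (b * starRingEnd ℂ b') := by
      simp [_root_.map_mul]
    rw [this]
    simp [Complex.div_re, Complex.add_re, Complex.sub_re, Complex.ofReal_mul]
    ring
  rw [hre]
  set r := (b * starRingEnd ℂ b').re
  have hr2 : r ^ 2 ≤ (a * c) * (a' * c') := by
    have h1 : r ^ 2 ≤ Complex.normSq (b * starRingEnd ℂ b') := by
      have := Complex.normSq_apply (b * starRingEnd ℂ b')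
      nlinarith [sq_nonneg (b * starRingEnd ℂ b').im]
    have h2 : Complex.normSq (b * starRingEnd ℂ b') = Complex.normSq b * Complex.normSq b' := by
      simp [Complex.normSq_mul]
    nlinarith [Complex.normSq_nonneg b, Complex.normSq_nonneg b', hbA, hbB]
  have key : 2 * (-r) ≤ a * a' + c * c' := by
    nlinarith [hr2, sq_nonneg (a * a' - c * c'), mul_nonneg ha ha', mul_nonneg hc hc',
      mul_nonneg (mul_nonneg ha ha') (mul_nonneg hc hc')]
  nlinarith [key, hac, hac']

lemma sep_bound {ρ : Matrix (Fin 2 × Fin 2) (Fin 2 × Fin 2) ℂ} (h : SepState ρ) :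
    (ov ρ).re ≤ 1 / 2 := by
  obtain ⟨k, p, A, B, hp, hsum, hD, hρ⟩ := h
  have : ov ρ = ∑ i, (p i : ℂ) * ov (A i ⊗ₖ B i) := by
    rw [hρ, ov_sum]
    exact Finset.sum_congr rfl fun i _ => ov_rsmul (p i) _
  rw [this, Complex.re_sum]
  have hterm : ∀ i, ((p i : ℂ) * ov (A i ⊗ₖ B i)).re ≤ p i * (1 / 2) := by
    intro i
    have h1 : ((p i : ℂ) * ov (A i ⊗ₖ B i)).re = p i * (ov (A i ⊗ₖ B i)).re := by
      simp [Complex.mul_re]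
    rw [h1]
    exact mul_le_mul_of_nonneg_left (prod_bound (hD i).1 (hD i).2) (hp i)
  calc ∑ i, ((p i : ℂ) * ov (A i ⊗ₖ B i)).re ≤ ∑ i, p i * (1 / 2) :=
        Finset.sum_le_sum fun i _ => hterm i
    _ = 1 / 2 := by rw [← Finset.sum_mul, hsum, one_mul]

lemma not_sep_of_lt {t : ℝ} (ht0 : 0 ≤ t) (ht1 : t < 1)
    (τ : Matrix (Fin 2 × Fin 2) (Fin 2 × Fin 2) ℂ) (hτ : IsDensity τ) :
    ¬ SepState ((1 / (1 + t)) • (singletProj + t • τ)) := by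
  intro h
  have hb := sep_bound h
  have hx := ov_psd_re_nonneg hτ.1
  have hcomp : ov ((1 / (1 + t)) • (singletProj + t • τ))
      = ((1 / (1 + t) : ℝ) : ℂ) * (1 + (t : ℂ) * ov τ) := by
    rw [ov_rsmul, ov_add, ov_P, ov_rsmul]
  rw [hcomp] at hb
  have hre : (((1 / (1 + t) : ℝ) : ℂ) * (1 + (t : ℂ) * ov τ)).re
      = (1 / (1 + t)) * (1 + t * (ov τ).re) := by
    simp only [Complex.ofReal_re, Complex.ofReal_im, Complex.mul_re, Complex.mul_im,
      Complex.add_re, Complex.add_im, Complex.one_re, Complex.one_im, hx.2]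
    ring
  rw [hre] at hb
  have hpos : 0 < 1 + t := by linarith
  rw [div_mul_eq_mul_div, one_mul, div_le_div_iff₀ hpos (by norm_num : (0:ℝ) < 2)] at hb
  nlinarith [mul_nonneg ht0 hx.1]

lemma psd_rsmul {n : Type*} [Fintype n] {M : Matrix n n ℂ} (hM : M.PosSemidef)
    {r : ℝ} (hr : 0 ≤ r) : (r • M).PosSemidef := by
  refine Matrix.PosSemidef.of_dotProduct_mulVec_nonneg ?_ ?_
  · unfold Matrix.IsHermitian
    rw [Matrix.conjTranspose_smul, hM.1]
    simp
  · intro x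
    have h1 : (r • M) *ᵥ x = r • (M *ᵥ x) := by
      ext i
      simp only [Matrix.mulVec, dotProduct, Pi.smul_apply, Matrix.smul_apply,
        Finset.smul_sum, Complex.real_smul]
      exact Finset.sum_congr rfl fun j _ => by ring
    rw [h1]
    have h2 : star x ⬝ᵥ (r • (M *ᵥ x)) = r • (star x ⬝ᵥ (M *ᵥ x)) := by
      simp only [dotProduct, Pi.smul_apply, Finset.smul_sum, Complex.real_smul]
      exact Finset.sum_congr rfl fun j _ => by ring
    rw [h2]
    have h3 := Complex.nonneg_iff.mp (hM.dotProduct_mulVec_nonneg x)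
    rw [Complex.nonneg_iff]
    constructor
    · simp only [Complex.real_smul, Complex.mul_re, Complex.ofReal_re, Complex.ofReal_im]
      rw [← h3.2]
      simpa using mul_nonneg hr h3.1
    · simp only [Complex.real_smul, Complex.mul_im, Complex.ofReal_re, Complex.ofReal_im]
      rw [← h3.2]
      ring

lemma P_mul_P : singletProj * singletProj = singletProj := by
  ext ⟨i,j⟩ ⟨k,l⟩
  fin_cases i <;> fin_cases j <;> fin_cases k <;> fin_cases l <;>
    simp [Matrix.mul_apply, P_apply, Fintype.sum_prod_type, Fin.sum_univ_two, Prod.ext_iff] <;>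
    norm_num

lemma P_herm : singletProjᴴ = singletProj := by
  have := (psd_outer singlet).1
  rw [singletProj]
  exact this

lemma one_sub_P_psd : ((1 : Matrix (Fin 2 × Fin 2) (Fin 2 × Fin 2) ℂ) - singletProj).PosSemidef := by
  have key : (1 : Matrix (Fin 2 × Fin 2) (Fin 2 × Fin 2) ℂ) - singletProj
      = ((1 : Matrix (Fin 2 × Fin 2) (Fin 2 × Fin 2) ℂ) - singletProj)ᴴ *
        ((1 : Matrix (Fin 2 × Fin 2) (Fin 2 × Fin 2) ℂ) - singletProj) := by
    rw [Matrix.conjTranspose_sub, Matrix.conjTranspose_one, P_herm,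
      Matrix.sub_mul, Matrix.mul_sub, Matrix.mul_sub, P_mul_P]
    simp
  rw [key]
  exact Matrix.posSemidef_conjTranspose_mul_self _

lemma P_trace : singletProj.trace = 1 := by
  simp only [Matrix.trace, Matrix.diag, Fintype.sum_prod_type, Fin.sum_univ_two, P_apply]
  norm_num [Prod.ext_iff]

noncomputable def tau0 : Matrix (Fin 2 × Fin 2) (Fin 2 × Fin 2) ℂ :=
  ((3:ℝ)⁻¹) • ((1 : Matrix (Fin 2 × Fin 2) (Fin 2 × Fin 2) ℂ) - singletProj)

lemma tau0_density : IsDensity tau0 := by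
  constructor
  · exact psd_rsmul one_sub_P_psd (by norm_num)
  · rw [tau0, Matrix.trace_smul, Matrix.trace_sub, Matrix.trace_one, P_trace]
    simp [Complex.real_smul]
    norm_num

noncomputable def Xp : Matrix (Fin 2) (Fin 2) ℂ := !![1/2, 1/2; 1/2, 1/2]
noncomputable def Xm : Matrix (Fin 2) (Fin 2) ℂ := !![1/2, -(1/2); -(1/2), 1/2]
noncomputable def Yp : Matrix (Fin 2) (Fin 2) ℂ :=
  !![1/2, -(Complex.I/2); Complex.I/2, 1/2]
noncomputable def Ym : Matrix (Fin 2) (Fin 2) ℂ :=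
  !![1/2, Complex.I/2; -(Complex.I/2), 1/2]
noncomputable def Zp : Matrix (Fin 2) (Fin 2) ℂ := !![1, 0; 0, 0]
noncomputable def Zm : Matrix (Fin 2) (Fin 2) ℂ := !![0, 0; 0, 1]

lemma Xp_density : IsDensity Xp := by
  constructor
  · have h : Xp = (1/2 : ℝ) • Matrix.vecMulVec ![1,1] (star ![1,1]) := by
      ext i j
      fin_cases i <;> fin_cases j <;> rw [Matrix.smul_apply, Matrix.vecMulVec_apply] <;>
        norm_num [Xp, Matrix.vecMulVec_apply, Complex.real_smul]
    rw [h]; exact psd_rsmul (psd_outer _) (by norm_num)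
  · simp [Xp, Matrix.trace_fin_two]; norm_num

lemma Xm_density : IsDensity Xm := by
  constructor
  · have h : Xm = (1/2 : ℝ) • Matrix.vecMulVec ![1,-1] (star ![1,-1]) := by
      ext i j
      fin_cases i <;> fin_cases j <;> rw [Matrix.smul_apply, Matrix.vecMulVec_apply] <;>
        norm_num [Xm, Matrix.vecMulVec_apply, Complex.real_smul]
    rw [h]; exact psd_rsmul (psd_outer _) (by norm_num)
  · simp [Xm, Matrix.trace_fin_two]; norm_num

lemma Yp_density : IsDensity Yp := by
  constructor
  · have h : Yp = (1/2 : ℝ) • Matrix.vecMulVec ![1, Complex.I] (star ![1, Complex.I]) := by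
      ext i j
      fin_cases i <;> fin_cases j <;> rw [Matrix.smul_apply, Matrix.vecMulVec_apply] <;>
        norm_num [Yp, Matrix.vecMulVec_apply, Complex.real_smul, Complex.ext_iff]
    rw [h]; exact psd_rsmul (psd_outer _) (by norm_num)
  · simp [Yp, Matrix.trace_fin_two]; norm_num

lemma Ym_density : IsDensity Ym := by
  constructor
  · have h : Ym = (1/2 : ℝ) • Matrix.vecMulVec ![1, -Complex.I] (star ![1, -Complex.I]) := by
      ext i j
      fin_cases i <;> fin_cases j <;> rw [Matrix.smul_apply, Matrix.vecMulVec_apply] <;>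
        norm_num [Ym, Matrix.vecMulVec_apply, Complex.real_smul, Complex.ext_iff]
    rw [h]; exact psd_rsmul (psd_outer _) (by norm_num)
  · simp [Ym, Matrix.trace_fin_two]; norm_num

lemma Zp_density : IsDensity Zp := by
  constructor
  · have h : Zp = Matrix.vecMulVec ![1, 0] (star ![1, 0]) := by
      ext i j
      fin_cases i <;> fin_cases j <;> norm_num [Zp, Matrix.vecMulVec_apply]
    rw [h]; exact psd_outer _
  · simp [Zp, Matrix.trace_fin_two]

lemma Zm_density : IsDensity Zm := by
  constructor
  · have h : Zm = Matrix.vecMulVec ![0, 1] (star ![0, 1]) := by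
      ext i j
      fin_cases i <;> fin_cases j <;> norm_num [Zm, Matrix.vecMulVec_apply]
    rw [h]; exact psd_outer _
  · simp [Zm, Matrix.trace_fin_two]

lemma sep_mix : SepState ((1 / (1 + (1:ℝ))) • (singletProj + (1:ℝ) • tau0)) := by
  refine ⟨6, fun _ => 1/6, ![Xp, Xm, Yp, Ym, Zp, Zm], ![Xm, Xp, Ym, Yp, Zm, Zp],
    fun i => by norm_num, by norm_num [Fin.sum_univ_six], ?_, ?_⟩
  · intro i
    fin_cases i
    · exact ⟨Xp_density, Xm_density⟩
    · exact ⟨Xm_density, Xp_density⟩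
    · exact ⟨Yp_density, Ym_density⟩
    · exact ⟨Ym_density, Yp_density⟩
    · exact ⟨Zp_density, Zm_density⟩
    · exact ⟨Zm_density, Zp_density⟩
  · ext ⟨i,j⟩ ⟨k,l⟩
    fin_cases i <;> fin_cases j <;> fin_cases k <;> fin_cases l <;>
      simp only [Fin.sum_univ_six, show (5:Fin 6) = Fin.succ 4 from rfl,
        Matrix.cons_val_succ, Matrix.cons_val_zero, Matrix.cons_val_one, Matrix.head_cons,
        Matrix.cons_val_two, Matrix.cons_val_three, Matrix.cons_val_four, Matrix.tail_cons,
        Matrix.sum_apply, Matrix.smul_apply, Matrix.add_apply, Matrix.sub_apply,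
        Matrix.one_apply, Matrix.kroneckerMap_apply, tau0, P_apply,
        Xp, Xm, Yp, Ym, Zp, Zm, Complex.real_smul] <;>
      norm_num [Prod.ext_iff, Complex.ext_iff]

/-- The global robustness of entanglement of the two-qubit singlet equals `1`:
some density matrix mixed with weight `t = 1` makes it separable, while for `t < 1`
every mixture remains entangled. -/
theorem stmt_11 :
    robustness singletProj = 1 ∧
    (∃ τ : Matrix (Fin 2 × Fin 2) (Fin 2 × Fin 2) ℂ, IsDensity τ ∧
      SepState ((1 / (1 + (1 : ℝ))) • (singletProj + (1 : ℝ) • τ))) ∧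
    (∀ t : ℝ, 0 ≤ t → t < 1 → ∀ τ : Matrix (Fin 2 × Fin 2) (Fin 2 × Fin 2) ℂ,
      IsDensity τ → ¬ SepState ((1 / (1 + t)) • (singletProj + t • τ))) := by
  refine ⟨?_, ⟨tau0, tau0_density, sep_mix⟩, fun t ht0 ht1 τ hτ => not_sep_of_lt ht0 ht1 τ hτ⟩
  have hleast : IsLeast {t : ℝ | 0 ≤ t ∧ ∃ τ : Matrix (Fin 2 × Fin 2) (Fin 2 × Fin 2) ℂ,
      IsDensity τ ∧ (1 / (1 + t)) • (singletProj + t • τ) ∈ {ρ | SepState ρ}} 1 := by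
    constructor
    · exact ⟨by norm_num, tau0, tau0_density, sep_mix⟩
    · intro s hs
      obtain ⟨hs0, τ, hτ, hsep⟩ := hs
      by_contra hlt
      push_neg at hlt
      exact not_sep_of_lt hs0 hlt τ hτ hsep
  exact hleast.csInf_eq
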